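/- For the polynomials a_n(x) defined by a_0 = a_1 = 1, a_n = a_{n-1} - x a_{n-2} for odd n ≥ 3, a_n = (1+x) a_{n-1} - x a_{n-2} for even n ≥ 2, and the polynomials N_{m,r}(x) defined for m ≥ 2 and 0 ≤ r ≤ m-1 by N_{m,r}(x) = a_{2m-2r-1}(x) if ⌊m/2⌋ ≤ r ≤ m-1 and N_{m,r}(x) = a_m(x) a_{m-2r-1}(x) if 0 ≤ r ≤ ⌊m/2⌋−1, the following identity holds: a_m(x) a_{m+1}(x) = (1-x) N_{m,0}(x) - (1 - δ_{m,2}) x² N_{m,1}(x). -/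
import Mathlib


open Polynomial

/-- The polynomials `a_n(x)`: `a₀ = a₁ = 1`, and for `n ≥ 2`,
`a_n = a_{n-1} - x a_{n-2}` if `n` is odd, `a_n = (1+x) a_{n-1} - x a_{n-2}` if `n` is even. -/
noncomputable def aPoly : ℕ → Polynomial ℤ
  | 0 => 1
  | 1 => 1
  | (n + 2) =>
    if (n + 2) % 2 = 1 then aPoly (n + 1) - Polynomial.X * aPoly n
    else (1 + Polynomial.X) * aPoly (n + 1) - Polynomial.X * aPoly n

/-- The polynomials `N_{m,r}(x)`: `a_{2m-2r-1}` if `⌊m/2⌋ ≤ r ≤ m-1`, and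
`a_m a_{m-2r-1}` if `0 ≤ r ≤ ⌊m/2⌋ - 1`. -/
noncomputable def NPoly (m r : ℕ) : Polynomial ℤ :=
  if m / 2 ≤ r then aPoly (2 * m - 2 * r - 1) else aPoly m * aPoly (m - 2 * r - 1)


lemma aPoly_two : aPoly 2 = 1 := by
  rw [show (2:ℕ) = 0 + 2 from rfl, aPoly]
  norm_num [aPoly]

lemma aPoly_three : aPoly 3 = 1 - Polynomial.X := by
  rw [show (3:ℕ) = 1 + 2 from rfl, aPoly]
  norm_num [aPoly, aPoly_two]

lemma aPoly_four : aPoly 4 = 1 - Polynomial.X - Polynomial.X ^ 2 := by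
  rw [show (4:ℕ) = 2 + 2 from rfl, aPoly]
  norm_num [aPoly_two, aPoly_three]
  ring

lemma aPoly_key (n : ℕ) :
    aPoly (n + 4) = (1 - Polynomial.X) * aPoly (n + 2) - Polynomial.X ^ 2 * aPoly n := by
  rcases Nat.even_or_odd n with ⟨k, rfl⟩ | ⟨k, rfl⟩
  · rw [show k + k + 4 = (k + k + 2) + 2 from rfl, aPoly,
      if_neg (by omega : ¬ ((k + k + 2) + 2) % 2 = 1),
      show k + k + 2 + 1 = (k + k + 1) + 2 from rfl, aPoly,
      if_pos (by omega : ((k + k + 1) + 2) % 2 = 1),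
      show k + k + 2 = (k + k) + 2 from rfl, aPoly,
      if_neg (by omega : ¬ ((k + k) + 2) % 2 = 1)]
    ring
  · rw [show 2 * k + 1 + 4 = (2 * k + 3) + 2 from rfl, aPoly,
      if_pos (by omega : ((2 * k + 3) + 2) % 2 = 1),
      show 2 * k + 3 + 1 = (2 * k + 2) + 2 from rfl, aPoly,
      if_neg (by omega : ¬ ((2 * k + 2) + 2) % 2 = 1),
      show 2 * k + 1 + 2 = (2 * k + 1) + 2 from rfl, aPoly,
      if_pos (by omega : ((2 * k + 1) + 2) % 2 = 1)]
    ring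

/-- `a_m a_{m+1} = (1-x) N_{m,0} - (1 - δ_{m,2}) x² N_{m,1}` for `m ≥ 2`. -/
theorem aPoly_mul_succ_eq_NPoly (m : ℕ) (hm : 2 ≤ m) :
    aPoly m * aPoly (m + 1) =
      (1 - Polynomial.X) * NPoly m 0 -
        (if m = 2 then 0 else 1) * Polynomial.X ^ 2 * NPoly m 1 := by
  match m, hm with
  | 2, _ =>
    have h0 : NPoly 2 0 = aPoly 2 * aPoly 1 := by simp [NPoly]
    rw [h0, if_pos rfl]
    norm_num [aPoly_two, aPoly_three, aPoly]
  | 3, _ =>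
    have h0 : NPoly 3 0 = aPoly 3 * aPoly 2 := by simp [NPoly]
    have h1 : NPoly 3 1 = aPoly 3 := by simp [NPoly]
    rw [h0, h1, if_neg (by norm_num)]
    rw [aPoly_two, aPoly_three, aPoly_four]
    ring
  | (n + 4), _ =>
    have h0 : NPoly (n + 4) 0 = aPoly (n + 4) * aPoly (n + 3) := by
      rw [NPoly, if_neg (by omega)]
      norm_num
    have h1 : NPoly (n + 4) 1 = aPoly (n + 4) * aPoly (n + 1) := by
      rw [NPoly, if_neg (by omega)]
      congr 2
    have hk : aPoly (n + 4 + 1) =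
        (1 - Polynomial.X) * aPoly (n + 3) - Polynomial.X ^ 2 * aPoly (n + 1) := by
      rw [show n + 4 + 1 = (n + 1) + 4 from rfl, aPoly_key]
    rw [h0, h1, hk, if_neg (by omega)]
    ring
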